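/- Let S be a finite set of integers with S ⊆ [0, min{L−1, T−3, ⌊(C̄−V̄)/V⌋}], let η be a real number with 0 ≤ η ≤ min{L−1, (C̄−V̄)/V}, and let t be an integer with 2 ≤ t ≤ T such that t ≤ T−s−1 for all s ∈ S. Then every (x, y) ∈ P satisfies x_t ≤ (C̄ − η·V)·y_t + η·V·y_{t−1} − Σ_{s∈S} (C̄ − V̄ − s·V)·(y_{t+s} − y_{t+s+1}). -/
import Mathlib


/-- Membership in the single-generator unit-commitment set `P`:
`x` is the generation vector, `y` the binary on/off vector, over periods `1,…,T`. -/
def inP (T L Ldn : ℤ) (Cl Cu V Vb : ℝ) (x y : ℤ → ℝ) : Prop :=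
  (∀ t : ℤ, 1 ≤ t → t ≤ T → 0 ≤ x t) ∧
  (∀ t : ℤ, 1 ≤ t → t ≤ T → y t = 0 ∨ y t = 1) ∧
  (∀ t k : ℤ, 2 ≤ t → t ≤ T → t ≤ k → k ≤ min T (t + L - 1) →
    -y (t - 1) + y t - y k ≤ 0) ∧
  (∀ t k : ℤ, 2 ≤ t → t ≤ T → t ≤ k → k ≤ min T (t + Ldn - 1) →
    y (t - 1) - y t + y k ≤ 1) ∧
  (∀ t : ℤ, 1 ≤ t → t ≤ T → Cl * y t ≤ x t) ∧
  (∀ t : ℤ, 1 ≤ t → t ≤ T → x t ≤ Cu * y t) ∧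
  (∀ t : ℤ, 2 ≤ t → t ≤ T → x t - x (t - 1) ≤ V * y (t - 1) + Vb * (1 - y (t - 1))) ∧
  (∀ t : ℤ, 2 ≤ t → t ≤ T → x (t - 1) - x t ≤ V * y t + Vb * (1 - y t))

/-- If the unit is off at `a` and on at `b > a`, there is a startup time in `(a, b]`. -/
lemma exists_startup (y : ℤ → ℝ) : ∀ (n : ℕ) (a b : ℤ), b - a = n → a < b →
    (∀ r, a ≤ r → r ≤ b → y r = 0 ∨ y r = 1) →
    y a = 0 → y b = 1 →
    ∃ u, a < u ∧ u ≤ b ∧ y (u - 1) = 0 ∧ y u = 1 := by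
  intro n
  induction n with
  | zero => intro a b h hab _ _ _; omega
  | succ k ih =>
    intro a b h hab hbin hy0 hy1
    rcases hbin (b - 1) (by omega) (by omega) with h0 | h1
    · exact ⟨b, hab, le_refl b, h0, hy1⟩
    · rcases lt_or_ge a (b - 1) with hlt | hle
      · obtain ⟨u, hu1, hu2, hu3, hu4⟩ := ih a (b - 1) (by omega) hlt
          (fun r hr1 hr2 => hbin r hr1 (by omega)) hy0 h1
        exact ⟨u, hu1, by omega, hu3, hu4⟩
      · exfalso
        have : a = b - 1 := by omega
        rw [this, h1] at hy0
        norm_num at hy0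

theorem stmt_10 (T L Ldn : ℤ) (Cl Cu V Vb : ℝ)
    (hT : 1 ≤ T) (hL : 1 ≤ L) (hLdn : 1 ≤ Ldn)
    (hCl : 0 < Cl) (hCu : Cl < Cu) (hV : 0 < V)
    (hVVb : Vb + V ≤ Cu) (hVb1 : Cl < Vb) (hVb2 : Vb < Cl + V)
    (S : Finset ℤ)
    (hS : S ⊆ Finset.Icc 0 (min (min (L - 1) (T - 3)) ⌊(Cu - Vb) / V⌋))
    (η : ℝ) (hη0 : 0 ≤ η) (hη1 : η ≤ min ((L : ℝ) - 1) ((Cu - Vb) / V))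
    (t : ℤ) (ht1 : 2 ≤ t) (ht2 : t ≤ T) (htS : ∀ s ∈ S, t ≤ T - s - 1)
    (x y : ℤ → ℝ) (hxy : inP T L Ldn Cl Cu V Vb x y) :
    x t ≤ (Cu - η * V) * y t + η * V * y (t - 1) -
      ∑ s ∈ S, (Cu - Vb - (s : ℝ) * V) * (y (t + s) - y (t + s + 1)) := by
  obtain ⟨hnn, hbin, hup, hdn, hcl, hcu, hru, hrd⟩ := hxy
  -- basic facts about members of S
  have hSfact : ∀ s ∈ S, 0 ≤ s ∧ s ≤ L - 1 ∧ t + s + 1 ≤ T ∧ (s : ℝ) * V ≤ Cu - Vb := by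
    intro s hsS
    have hmem := hS hsS
    rw [Finset.mem_Icc] at hmem
    have hs1 : 0 ≤ s := hmem.1
    have hs2 : s ≤ L - 1 := le_trans hmem.2 (le_trans (min_le_left _ _) (min_le_left _ _))
    have hs3 : t + s + 1 ≤ T := by have := htS s hsS; omega
    have hs4 : s ≤ ⌊(Cu - Vb) / V⌋ := le_trans hmem.2 (min_le_right _ _)
    refine ⟨hs1, hs2, hs3, ?_⟩
    have : (s : ℝ) ≤ (Cu - Vb) / V := Int.le_floor.mp hs4
    calc (s : ℝ) * V ≤ ((Cu - Vb) / V) * V := by nlinarith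
      _ = Cu - Vb := by field_simp
  have hηV : η * V ≤ Cu - Vb := by
    have h1 : η ≤ (Cu - Vb) / V := le_trans hη1 (min_le_right _ _)
    calc η * V ≤ ((Cu - Vb) / V) * V := by nlinarith
      _ = Cu - Vb := by field_simp
  -- key structural lemma: a shutdown at t+s+1 (s ∈ S) forces y ≡ 1 on [t, t+s]
  have noOff : ∀ s ∈ S, y (t + s) = 1 → y (t + s + 1) = 0 →
      ∀ r, t ≤ r → r ≤ t + s → y r = 1 := by
    intro s hsS hy1 hy0 r hr1 hr2
    obtain ⟨hs0, hsL, hsT, _⟩ := hSfact s hsS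
    by_contra hne
    have hyr : y r = 0 := by
      rcases hbin r (by omega) (by omega) with h | h
      · exact h
      · exact absurd h hne
    have hrlt : r < t + s := by
      rcases eq_or_lt_of_le hr2 with h | h
      · rw [h, hy1] at hyr; norm_num at hyr
      · exact h
    obtain ⟨u, hu1, hu2, hu3, hu4⟩ := exists_startup y (t + s - r).toNat r (t + s)
      (by omega) hrlt (fun q hq1 hq2 => hbin q (by omega) (by omega)) hyr hy1
    have hcon := hup u (t + s + 1) (by omega) (by omega) (by omega)
      (by rw [le_min_iff]; omega)
    rw [hu3, hu4, hy0] at hcon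
    norm_num at hcon
  -- ramp chain: a shutdown at t+s+1 bounds x t
  have rampChain : ∀ s ∈ S, y (t + s) = 1 → y (t + s + 1) = 0 →
      x t ≤ Vb + (s : ℝ) * V := by
    intro s hsS hy1 hy0
    obtain ⟨hs0, hsL, hsT, _⟩ := hSfact s hsS
    have hall := noOff s hsS hy1 hy0
    have hx0 : x (t + s + 1) = 0 := by
      have h1 := hcu (t + s + 1) (by omega) (by omega)
      have h2 := hnn (t + s + 1) (by omega) (by omega)
      rw [hy0] at h1
      linarith [h1, h2]
    have hbase : x (t + s) ≤ Vb := by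
      have h := hrd (t + s + 1) (by omega) (by omega)
      have heq : t + s + 1 - 1 = t + s := by ring
      rw [heq, hy0, hx0] at h
      linarith
    have chain : ∀ j : ℕ, (j : ℤ) ≤ s → x (t + s - (j : ℤ)) ≤ Vb + (j : ℝ) * V := by
      intro j
      induction j with
      | zero => intro _; simpa using hbase
      | succ k ihk =>
        intro hk
        push_cast at hk ⊢
        have hk' : (k : ℤ) ≤ s := by omega
        have ih := ihk hk'
        have hyr : y (t + s - (k : ℤ)) = 1 := hall _ (by omega) (by omega)
        have h := hrd (t + s - (k : ℤ)) (by omega) (by omega)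
        rw [hyr] at h
        have heq : t + s - ((k : ℤ) + 1) = t + s - (k : ℤ) - 1 := by ring
        rw [heq]
        push_cast at ih
        nlinarith [h, ih]
    have hfin := chain s.toNat (by omega)
    have heq : t + s - (s.toNat : ℤ) = t := by omega
    rw [heq] at hfin
    have hc : ((s.toNat : ℕ) : ℝ) = (s : ℝ) := by
      exact_mod_cast congrArg (fun z : ℤ => (z : ℝ)) (Int.toNat_of_nonneg hs0)
    rw [hc] at hfin
    exact hfin
  -- term sign facts
  have yb : ∀ s ∈ S, (y (t + s) = 0 ∨ y (t + s) = 1) ∧ (y (t + s + 1) = 0 ∨ y (t + s + 1) = 1) := by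
    intro s hsS
    obtain ⟨hs0, hsL, hsT, _⟩ := hSfact s hsS
    exact ⟨hbin _ (by omega) (by omega), hbin _ (by omega) (by omega)⟩
  by_cases hpos : ∃ s ∈ S, y (t + s) = 1 ∧ y (t + s + 1) = 0
  · -- there is a shutdown term
    obtain ⟨s₀, hs₀S, hy1, hy0⟩ := hpos
    obtain ⟨hs₀0, hs₀L, hs₀T, hs₀V⟩ := hSfact s₀ hs₀S
    have hall := noOff s₀ hs₀S hy1 hy0
    have hyt : y t = 1 := hall t le_rfl (by omega)
    have hxt : x t ≤ Vb + (s₀ : ℝ) * V := rampChain s₀ hs₀S hy1 hy0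
    -- bound the sum by its s₀ term
    have hsum : ∑ s ∈ S, (Cu - Vb - (s : ℝ) * V) * (y (t + s) - y (t + s + 1)) ≤
        Cu - Vb - (s₀ : ℝ) * V := by
      have hterm : ∀ s ∈ S, (Cu - Vb - (s : ℝ) * V) * (y (t + s) - y (t + s + 1)) ≤
          if s = s₀ then Cu - Vb - (s₀ : ℝ) * V else 0 := by
        intro s hsS
        obtain ⟨hs0, hsL, hsT, hsV⟩ := hSfact s hsS
        obtain ⟨hb1, hb2⟩ := yb s hsS
        by_cases hss : s = s₀
        · subst hss
          rw [if_pos rfl, hy1, hy0]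
          norm_num
        · rw [if_neg hss]
          have hd : y (t + s) - y (t + s + 1) ≤ 0 := by
            rcases hb1 with h1 | h1
            · rcases hb2 with h2 | h2 <;> rw [h1, h2] <;> norm_num
            · rcases hb2 with h2 | h2
              · exfalso
                rcases lt_or_gt_of_ne hss with hlt | hgt
                · -- s < s₀ : y (t+s+1) should be 1 by noOff for s₀
                  have := hall (t + s + 1) (by omega) (by omega)
                  rw [this] at h2; norm_num at h2
                · -- s > s₀ : y (t+s₀+1) should be 1 by noOff for s
                  have := noOff s hsS h1 h2 (t + s₀ + 1) (by omega) (by omega)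
                  rw [this] at hy0; norm_num at hy0
              · rw [h1, h2]; norm_num
          nlinarith [hd, hsV]
      calc ∑ s ∈ S, (Cu - Vb - (s : ℝ) * V) * (y (t + s) - y (t + s + 1))
          ≤ ∑ s ∈ S, if s = s₀ then Cu - Vb - (s₀ : ℝ) * V else 0 :=
            Finset.sum_le_sum hterm
        _ = Cu - Vb - (s₀ : ℝ) * V := by
            rw [Finset.sum_ite_eq' S s₀ (fun _ => Cu - Vb - (s₀ : ℝ) * V), if_pos hs₀S]
    rcases hbin (t - 1) (by omega) (by omega) with hym | hym
    · -- y (t-1) = 0 : startup at t, so s₀ = L - 1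
      have hs₀eq : s₀ = L - 1 := by
        by_contra hne
        have hlt : s₀ ≤ L - 2 := by omega
        have hcon := hup t (t + s₀ + 1) ht1 ht2 (by omega) (by rw [le_min_iff]; omega)
        rw [hym, hyt, hy0] at hcon
        norm_num at hcon
      have hηs : η ≤ (s₀ : ℝ) := by
        have := le_trans hη1 (min_le_left ((L : ℝ) - 1) ((Cu - Vb) / V))
        have hc : ((s₀ : ℤ) : ℝ) = (L : ℝ) - 1 := by
          rw [hs₀eq]; push_cast; ring
        rw [hc]; exact this
      -- x t ≤ Vb here
      have hxm : x (t - 1) = 0 := by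
        have h1 := hcu (t - 1) (by omega) (by omega)
        have h2 := hnn (t - 1) (by omega) (by omega)
        rw [hym] at h1
        linarith
      have hxtVb : x t ≤ Vb := by
        have h := hru t ht1 ht2
        rw [hym, hxm] at h
        linarith
      rw [hyt, hym]
      nlinarith [hsum, hxtVb, hηs, hV]
    · rw [hyt, hym]
      nlinarith [hsum, hxt]
  · -- no shutdown term: the sum is nonpositive
    push_neg at hpos
    have hsum : ∑ s ∈ S, (Cu - Vb - (s : ℝ) * V) * (y (t + s) - y (t + s + 1)) ≤ 0 := by
      apply Finset.sum_nonpos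
      intro s hsS
      obtain ⟨hs0, hsL, hsT, hsV⟩ := hSfact s hsS
      obtain ⟨hb1, hb2⟩ := yb s hsS
      have hd : y (t + s) - y (t + s + 1) ≤ 0 := by
        rcases hb1 with h1 | h1
        · rcases hb2 with h2 | h2 <;> rw [h1, h2] <;> norm_num
        · rcases hb2 with h2 | h2
          · exact absurd h2 (hpos s hsS h1)
          · rw [h1, h2]; norm_num
      nlinarith [hd, hsV]
    rcases hbin t (by omega) ht2 with hyt | hyt
    · have hx0 : x t ≤ 0 := by
        have h := hcu t (by omega) ht2
        rw [hyt] at h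
        linarith
      rcases hbin (t - 1) (by omega) (by omega) with hym | hym <;> rw [hyt, hym] <;>
        nlinarith [hsum, hx0, hηV, hV, hη0]
    · rcases hbin (t - 1) (by omega) (by omega) with hym | hym
      · have hxm : x (t - 1) = 0 := by
          have h1 := hcu (t - 1) (by omega) (by omega)
          have h2 := hnn (t - 1) (by omega) (by omega)
          rw [hym] at h1
          linarith
        have hxtVb : x t ≤ Vb := by
          have h := hru t ht1 ht2
          rw [hym, hxm] at h
          linarith
        rw [hyt, hym]
        nlinarith [hsum, hxtVb, hηV]
      · have hxCu : x t ≤ Cu := by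
          have h := hcu t (by omega) ht2
          rw [hyt] at h
          linarith
        rw [hyt, hym]
        nlinarith [hsum, hxCu]
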